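/- arXiv:2201.05476 — 2 statements merged into one kernel-verified Lean document; each statement's English description precedes it below -/
import Mathlib

section
/- Let n = 3, V ∈ ℝ³ with V ≠ 0, and ℓ₀ ∈ ℤ³ \ {0}. Suppose Γ₂ > 0, Γ₀ < 0 and Γ₂(2π/L)²|ℓ₀|² + Γ₀ < 0. Then there exists x ∈ ℝ³ \ {0} with x ⊥ V and x ⊥ ℓ₀ such that xᵀ Re σ(ℓ₀) x < 0, where Re σ(ℓ₀) = Γ₂(2π/L)⁴|ℓ₀|⁴ I + Γ₀(2π/L)²|ℓ₀|² I + 2β σ_P(ℓ₀) V Vᵀ σ_P(ℓ₀) and β > 0. -/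
open Matrix Finset Real

noncomputable def sigmaP {n : ℕ} (ℓ : Fin n → ℤ) : Matrix (Fin n) (Fin n) ℝ :=
  if ℓ = 0 then 1
  else 1 - (∑ i, ((ℓ i : ℝ)) ^ 2)⁻¹ • Matrix.vecMulVec (fun i => (ℓ i : ℝ)) (fun i => (ℓ i : ℝ))

lemma exists_perp (V W : Fin 3 → ℝ) :
    ∃ x : Fin 3 → ℝ, x ≠ 0 ∧ x ⬝ᵥ V = 0 ∧ x ⬝ᵥ W = 0 := by
  by_contra h
  push_neg at h
  let f : (Fin 3 → ℝ) →ₗ[ℝ] (Fin 2 → ℝ) :=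
    { toFun := fun x => ![x ⬝ᵥ V, x ⬝ᵥ W],
      map_add' := by intro a b; funext i; fin_cases i <;> simp [add_dotProduct]
      map_smul' := by intro c a; funext i; fin_cases i <;> simp [smul_dotProduct] }
  have hinj : Function.Injective f := by
    rw [← LinearMap.ker_eq_bot, LinearMap.ker_eq_bot']
    intro x hx
    by_contra hx0
    have h0 : x ⬝ᵥ V = 0 := by
      have := congrFun hx 0; simpa [f] using this
    have h1 : x ⬝ᵥ W = 0 := by
      have := congrFun hx 1; simpa [f] using this
    exact h x hx0 h0 h1
  have := LinearMap.finrank_le_finrank_of_injective hinj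
  simp [Module.finrank_pi] at this

theorem stmt5 (V : Fin 3 → ℝ) (hV : V ≠ 0) (ℓ₀ : Fin 3 → ℤ) (hℓ₀ : ℓ₀ ≠ 0)
    (Γ₂ Γ₀ β L : ℝ) (hΓ₂ : 0 < Γ₂) (hΓ₀ : Γ₀ < 0) (hβ : 0 < β) (hL : 0 < L)
    (hcond : Γ₂ * (2 * π / L) ^ 2 * (∑ i, ((ℓ₀ i : ℝ)) ^ 2) + Γ₀ < 0) :
    ∃ x : Fin 3 → ℝ, x ≠ 0 ∧ x ⬝ᵥ V = 0 ∧ x ⬝ᵥ (fun i => ((ℓ₀ i : ℝ))) = 0 ∧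
      x ⬝ᵥ ((Γ₂ * (2 * π / L) ^ 4 * (∑ i, ((ℓ₀ i : ℝ)) ^ 2) ^ 2
              + Γ₀ * (2 * π / L) ^ 2 * (∑ i, ((ℓ₀ i : ℝ)) ^ 2)) • (1 : Matrix (Fin 3) (Fin 3) ℝ)
            + (2 * β) • ((sigmaP ℓ₀) * (Matrix.vecMulVec V V) * (sigmaP ℓ₀))) *ᵥ x < 0 := by
  obtain ⟨x, hx0, hxV, hxl⟩ := exists_perp V (fun i => ((ℓ₀ i : ℝ)))
  refine ⟨x, hx0, hxV, hxl, ?_⟩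
  set S : ℝ := ∑ i, ((ℓ₀ i : ℝ)) ^ 2 with hSdef
  have hS : 0 < S := by
    obtain ⟨i, hi⟩ : ∃ i, ℓ₀ i ≠ 0 := by
      by_contra hc; push_neg at hc; exact hℓ₀ (funext hc)
    have hi' : ((ℓ₀ i : ℝ)) ≠ 0 := Int.cast_ne_zero.mpr hi
    exact Finset.sum_pos' (fun j _ => sq_nonneg _)
      ⟨i, Finset.mem_univ i, by positivity⟩
  -- σP fixes x
  have hPx : sigmaP ℓ₀ *ᵥ x = x := by
    rw [sigmaP, if_neg hℓ₀, Matrix.sub_mulVec, Matrix.one_mulVec]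
    have hl : (fun i => ((ℓ₀ i : ℝ))) ⬝ᵥ x = 0 := by
      rw [dotProduct_comm]; exact hxl
    have : Matrix.vecMulVec (fun i => ((ℓ₀ i : ℝ))) (fun i => ((ℓ₀ i : ℝ))) *ᵥ x = 0 := by
      funext i
      simp only [Matrix.mulVec, Matrix.vecMulVec_apply, dotProduct, Pi.zero_apply]
      have : ∑ j, ((ℓ₀ j : ℝ)) * x j = 0 := by simpa [dotProduct, mul_comm] using hxl
      rw [show (fun j => ((ℓ₀ i : ℝ)) * ((ℓ₀ j : ℝ)) * x j) = fun j => ((ℓ₀ i : ℝ)) * (((ℓ₀ j : ℝ)) * x j) from funext fun j => mul_assoc _ _ _, ← Finset.mul_sum, this, mul_zero]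
    rw [Matrix.smul_mulVec, this, smul_zero, sub_zero]
  have hWx : Matrix.vecMulVec V V *ᵥ x = 0 := by
    funext i
    simp only [Matrix.mulVec, Matrix.vecMulVec_apply, dotProduct, Pi.zero_apply]
    have hVx : ∑ j, V j * x j = 0 := by
      simpa [dotProduct, mul_comm] using hxV
    rw [show (fun j => V i * V j * x j) = fun j => V i * (V j * x j) from funext fun j => mul_assoc _ _ _, ← Finset.mul_sum, hVx, mul_zero]
  have hMx : ((sigmaP ℓ₀) * (Matrix.vecMulVec V V) * (sigmaP ℓ₀)) *ᵥ x = 0 := by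
    rw [← Matrix.mulVec_mulVec, hPx, ← Matrix.mulVec_mulVec, hWx, Matrix.mulVec_zero]
  rw [Matrix.add_mulVec, Matrix.smul_mulVec, Matrix.smul_mulVec, hMx,
    smul_zero, add_zero, Matrix.one_mulVec, dotProduct_smul, smul_eq_mul]
  have hxx : 0 < x ⬝ᵥ x := by
    have h1 : x ⬝ᵥ x ≠ 0 := fun h => hx0 (dotProduct_self_eq_zero.mp h)
    have h2 : 0 ≤ x ⬝ᵥ x := Finset.sum_nonneg fun i _ => mul_self_nonneg _
    exact lt_of_le_of_ne h2 (Ne.symm h1)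
  have ht : 0 < 2 * π / L := by positivity
  have hc : Γ₂ * (2 * π / L) ^ 4 * S ^ 2 + Γ₀ * (2 * π / L) ^ 2 * S < 0 := by
    nlinarith [mul_pos (mul_pos ht ht) hS, hcond]
  exact mul_neg_of_neg_of_pos hc hxx
end

section
/- Let Γ₂ > 0, Γ₀ ∈ ℝ, α < 0, β > 0, L > 0, and suppose that for all ℓ ∈ ℤⁿ \ {0}, Γ₂(2π/L)⁴|ℓ|⁴ + Γ₀(2π/L)²|ℓ|² ∉ [2α, 0]. Let V ∈ ℝⁿ with |V|² = -α/β. If ℓ ∈ ℤⁿ \ {0} and û ∈ ℂⁿ satisfy Γ₂(2π/L)⁴|ℓ|⁴|û|² + Γ₀(2π/L)²|ℓ|²|û|² + 2β|V·û|² = 0, then û = 0. -/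
open Finset Real

theorem stmt12 (n : ℕ) (Γ₂ Γ₀ α β L : ℝ) (hΓ₂ : 0 < Γ₂) (hα : α < 0) (hβ : 0 < β)
    (hL : 0 < L)
    (hcond : ∀ ℓ : Fin n → ℤ, ℓ ≠ 0 →
      Γ₂ * (2 * π / L) ^ 4 * (∑ i, ((ℓ i : ℝ)) ^ 2) ^ 2
        + Γ₀ * (2 * π / L) ^ 2 * (∑ i, ((ℓ i : ℝ)) ^ 2) ∉ Set.Icc (2 * α) 0)
    (V : Fin n → ℝ) (hV : ∑ i, (V i) ^ 2 = -α / β)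
    (ℓ : Fin n → ℤ) (hℓ : ℓ ≠ 0) (u : Fin n → ℂ)
    (h : Γ₂ * (2 * π / L) ^ 4 * (∑ i, ((ℓ i : ℝ)) ^ 2) ^ 2 * (∑ i, Complex.normSq (u i))
        + Γ₀ * (2 * π / L) ^ 2 * (∑ i, ((ℓ i : ℝ)) ^ 2) * (∑ i, Complex.normSq (u i))
        + 2 * β * Complex.normSq (∑ k, (V k : ℂ) * u k) = 0) :
    u = 0 := by
  set A : ℝ := Γ₂ * (2 * π / L) ^ 4 * (∑ i, ((ℓ i : ℝ)) ^ 2) ^ 2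
      + Γ₀ * (2 * π / L) ^ 2 * (∑ i, ((ℓ i : ℝ)) ^ 2) with hA
  set S : ℝ := ∑ i, Complex.normSq (u i) with hS
  have hSnn : 0 ≤ S := Finset.sum_nonneg fun i _ => Complex.normSq_nonneg _
  have hq : Complex.normSq (∑ k, (V k : ℂ) * u k) ≥ 0 := Complex.normSq_nonneg _
  -- Cauchy–Schwarz
  have hCS : Complex.normSq (∑ k, (V k : ℂ) * u k) ≤ (∑ k, (V k) ^ 2) * S := by
    have hre : (∑ k, (V k : ℂ) * u k).re = ∑ k, V k * (u k).re := by
      rw [Complex.re_sum]; exact Finset.sum_congr rfl fun k _ => by simp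
    have him : (∑ k, (V k : ℂ) * u k).im = ∑ k, V k * (u k).im := by
      rw [Complex.im_sum]; exact Finset.sum_congr rfl fun k _ => by simp
    have h1 := sum_mul_sq_le_sq_mul_sq Finset.univ V (fun k => (u k).re)
    have h2 := sum_mul_sq_le_sq_mul_sq Finset.univ V (fun k => (u k).im)
    have hSsplit : S = (∑ k, (u k).re ^ 2) + (∑ k, (u k).im ^ 2) := by
      rw [hS, ← Finset.sum_add_distrib]
      exact Finset.sum_congr rfl fun k _ => by
        simp [Complex.normSq_apply, sq]
    rw [Complex.normSq_apply, hre, him, hSsplit, mul_add]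
    simp only [← sq]
    exact add_le_add h1 h2
  have hAS : A * S + 2 * β * Complex.normSq (∑ k, (V k : ℂ) * u k) = 0 := by
    rw [hA, add_mul]; linarith [h]
  have hS0 : S = 0 := by
    rcases not_and_or.mp (fun hmem => hcond ℓ hℓ ⟨hmem.1, hmem.2⟩) with hlt | hgt
    all_goals rw [← hA] at *
    · -- A < 2α
      push_neg at hlt
      have hA2 : A - 2 * α < 0 := by linarith
      have hVS : (∑ k, (V k) ^ 2) * S = (-α / β) * S := by rw [hV]
      have : 2 * β * Complex.normSq (∑ k, (V k : ℂ) * u k) ≤ -2 * α * S := by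
        have := mul_le_mul_of_nonneg_left hCS (le_of_lt (by linarith : (0:ℝ) < 2 * β))
        rw [hVS] at this
        calc 2 * β * Complex.normSq (∑ k, (V k : ℂ) * u k)
            ≤ 2 * β * ((-α / β) * S) := this
          _ = -2 * α * S := by field_simp
      nlinarith
    · -- A > 0
      push_neg at hgt
      nlinarith
  have hall : ∀ i ∈ Finset.univ, Complex.normSq (u i) = 0 := by
    intro i _
    exact le_antisymm (by
      have := (Finset.sum_eq_zero_iff_of_nonneg fun j _ => Complex.normSq_nonneg (u j)).mp hS0
      exact le_of_eq (this i (Finset.mem_univ i))) (Complex.normSq_nonneg _)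
  funext i
  exact Complex.normSq_eq_zero.mp (hall i (Finset.mem_univ i))
end
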